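/- For every even positive integer n and every negative integer β with β + (n-2)/2 ≥ 0, the derivative with respect to β of C(β,n) = 2^{-n-2β}·π^{(2-n)/2}/(Γ(β + n/2)·Γ(β + 1)), evaluated at β, equals (-1)^{β+1}·2^{-n-2β}·π^{(2-n)/2}·(-β-1)! / (β + (n-2)/2)!. -/

import Mathlib

open Complex Finset

lemma inv_Gamma_eq (m : ℕ) (z : ℂ) :
    (Gamma z)⁻¹ = (∏ j ∈ range m, (z + j)) * (Gamma (z + m))⁻¹ := by
  induction m with
  | zero => simp
  | succ m ih =>
      rw [ih, prod_range_succ, one_div_Gamma_eq_self_mul_one_div_Gamma_add_one (z + m)]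
      push_cast
      rw [← mul_assoc, add_assoc]

lemma prod_neg_eq (m : ℕ) :
    (∏ j ∈ range m, ((-(m : ℂ)) + j)) = (-1) ^ m * (Nat.factorial m : ℂ) := by
  have h := Finset.prod_range_reflect (fun j : ℕ => ((-(m : ℂ)) + j)) m
  rw [← h]
  have h2 : ∀ j ∈ range m, ((-(m : ℂ)) + ((m - 1 - j : ℕ) : ℂ)) = -(((j : ℂ)) + 1) := by
    intro j hj
    have hjm : j < m := Finset.mem_range.mp hj
    have : ((m - 1 - j : ℕ) : ℂ) = (m : ℂ) - 1 - j := by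
      push_cast [Nat.cast_sub (by omega : 1 + j ≤ m), Nat.sub_sub]
      ring
    rw [this]; ring
  rw [Finset.prod_congr rfl h2]
  have : ∀ j ∈ range m, (-(((j : ℂ)) + 1)) = (-1) * ((j : ℂ) + 1) := by intros; ring
  rw [Finset.prod_congr rfl this, Finset.prod_mul_distrib, Finset.prod_const]
  have : (∏ j ∈ range m, ((j : ℂ) + 1)) = (Nat.factorial m : ℂ) := by
    rw [← Finset.prod_range_add_one_eq_factorial m]
    push_cast
    rfl
  rw [this]
  simp [Finset.card_range]

lemma hasDerivAt_inv_Gamma_neg_nat (m : ℕ) :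
    HasDerivAt (fun z : ℂ => (Gamma z)⁻¹) ((-1) ^ m * (Nat.factorial m : ℂ)) (-(m : ℂ)) := by
  have hfun : (fun z : ℂ => (Gamma z)⁻¹) =
      fun z : ℂ => ((∏ j ∈ range m, (z + j)) * (z + m)) *
        (((fun s : ℂ => (Gamma s)⁻¹) ∘ (fun z : ℂ => z + ((m : ℂ) + 1))) z) := by
    funext z
    rw [inv_Gamma_eq (m + 1) z, prod_range_succ]
    simp only [Function.comp]
    push_cast
    ring_nf
  rw [hfun]
  have hQ : DifferentiableAt ℂ (fun z : ℂ => ∏ j ∈ range m, (z + j)) (-(m : ℂ)) := by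
    apply DifferentiableAt.fun_finsetProd
    intro j _
    exact (differentiableAt_id.add_const _)
  have hG : HasDerivAt ((fun s : ℂ => (Gamma s)⁻¹) ∘ (fun z : ℂ => z + ((m : ℂ) + 1)))
      (deriv (fun s : ℂ => (Gamma s)⁻¹) (-(m : ℂ) + ((m : ℂ) + 1)) * 1) (-(m : ℂ)) :=
    HasDerivAt.comp _ (differentiable_one_div_Gamma _).hasDerivAt
      ((hasDerivAt_id _).add_const _)
  have h1 : HasDerivAt (fun z : ℂ => (∏ j ∈ range m, (z + j)) * (z + m))
      (deriv (fun z : ℂ => ∏ j ∈ range m, (z + j)) (-(m : ℂ)) * ((-(m : ℂ)) + m) +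
        (∏ j ∈ range m, ((-(m : ℂ)) + j)) * 1) (-(m : ℂ)) :=
    hQ.hasDerivAt.mul ((hasDerivAt_id _).add_const _)
  have key := h1.mul hG
  convert key using 1
  case e'_4 => rfl
  case e'_5 => rfl
  case e'_8 => rfl
  simp only [Function.comp]
  have hz : (-(m : ℂ)) + m = 0 := by ring
  have hg1 : Gamma ((-(m : ℂ)) + ((m : ℂ) + 1)) = 1 := by
    rw [show (-(m : ℂ)) + ((m : ℂ) + 1) = 1 by ring, Gamma_one]
  rw [prod_neg_eq]
  rw [hz, hg1]
  ring

/-- Derivative of `C(β,n) = 2^{-n-2β} π^{(2-n)/2} / (Γ(β+n/2) Γ(β+1))` at a negative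
integer `β = -k` with `β + (n-2)/2 ≥ 0`, for `n` even and positive. -/
theorem deriv_C_at_neg_integer (n : ℕ) (hn : Even n) (hpos : 0 < n)
    (k : ℕ) (hk : 1 ≤ k) (hkm : k ≤ n / 2 - 1) :
    HasDerivAt
      (fun z : ℂ => (2 : ℂ) ^ (-(n : ℂ) - 2 * z) * (Real.pi : ℂ) ^ ((2 - (n : ℂ)) / 2) /
        (Complex.Gamma (z + (n : ℂ) / 2) * Complex.Gamma (z + 1)))
      ((-1 : ℂ) ^ (k + 1) * (2 : ℂ) ^ (-(n : ℂ) + 2 * (k : ℂ)) *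
        (Real.pi : ℂ) ^ ((2 - (n : ℂ)) / 2) *
        (Nat.factorial (k - 1) : ℂ) / (Nat.factorial (n / 2 - 1 - k) : ℂ))
      (-(k : ℂ)) := by
  set p : ℕ := n / 2 with hp
  set m : ℕ := k - 1 with hm
  set q : ℕ := n / 2 - 1 - k with hq
  set c : ℂ := ((2 : ℂ) - (n : ℂ)) / 2 with hc
  have hp2 : 2 ≤ p := by
    have := hn.two_dvd
    omega
  have hkp : k + 1 ≤ p := by omega
  have hn2 : (n : ℂ) = 2 * (p : ℂ) := by
    have : p * 2 = n := Nat.div_mul_cancel hn.two_dvd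
    push_cast [← this]
    ring
  have hval : -(k : ℂ) + (n : ℂ) / 2 = ((q : ℂ) + 1) := by
    rw [hn2]
    have hqk : q + 1 + k = p := by omega
    have : ((q : ℂ) + 1 + (k : ℂ)) = (p : ℂ) := by exact_mod_cast congrArg Nat.cast hqk
    linear_combination -this
  have hs : ∀ mm : ℕ, -(k : ℂ) + (n : ℂ) / 2 ≠ -(mm : ℂ) := by
    intro mm h
    rw [hval] at h
    have h' : (q : ℝ) + 1 = -(mm : ℝ) := by
      have := congrArg Complex.re h
      simpa using this
    have h1 : (0:ℝ) ≤ (q : ℝ) := Nat.cast_nonneg q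
    have h2 : (0:ℝ) ≤ (mm : ℝ) := Nat.cast_nonneg mm
    linarith
  -- the analytic factor A
  have hA : DifferentiableAt ℂ
      (fun z : ℂ => (2 : ℂ) ^ (-(n : ℂ) - 2 * z) * (Real.pi : ℂ) ^ c /
        Complex.Gamma (z + (n : ℂ) / 2)) (-(k : ℂ)) := by
    have h2pow : DifferentiableAt ℂ (fun z : ℂ => (2 : ℂ) ^ (-(n : ℂ) - 2 * z)) (-(k : ℂ)) := by
      apply DifferentiableAt.const_cpow
      · exact (differentiableAt_const _).sub (differentiableAt_id.const_mul 2)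
      · exact Or.inl two_ne_zero
    have hGam : DifferentiableAt ℂ (fun z : ℂ => Complex.Gamma (z + (n : ℂ) / 2)) (-(k : ℂ)) := by
      have := (Complex.differentiableAt_Gamma _ hs).comp (-(k : ℂ))
        (differentiableAt_id.add_const ((n : ℂ) / 2))
      exact this
    exact (h2pow.mul_const _).div hGam (Complex.Gamma_ne_zero hs)
  have hpt : -(k : ℂ) + 1 = -((m : ℕ) : ℂ) := by
    have : (m : ℂ) = (k : ℂ) - 1 := by
      rw [hm, Nat.cast_sub hk, Nat.cast_one]
    rw [this]; ring
  have hOuter : HasDerivAt (fun s : ℂ => (Gamma s)⁻¹)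
      ((-1) ^ m * (Nat.factorial m : ℂ)) (-(k : ℂ) + 1) := by
    rw [hpt]; exact hasDerivAt_inv_Gamma_neg_nat m
  have hB : HasDerivAt ((fun s : ℂ => (Gamma s)⁻¹) ∘ (fun z : ℂ => z + 1))
      ((-1) ^ m * (Nat.factorial m : ℂ) * 1) (-(k : ℂ)) :=
    HasDerivAt.comp _ hOuter ((hasDerivAt_id _).add_const 1)
  have hfun : (fun z : ℂ => (2 : ℂ) ^ (-(n : ℂ) - 2 * z) * (Real.pi : ℂ) ^ c /
        (Complex.Gamma (z + (n : ℂ) / 2) * Complex.Gamma (z + 1))) =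
      fun z : ℂ => ((2 : ℂ) ^ (-(n : ℂ) - 2 * z) * (Real.pi : ℂ) ^ c /
        Complex.Gamma (z + (n : ℂ) / 2)) *
        (((fun s : ℂ => (Gamma s)⁻¹) ∘ (fun z : ℂ => z + 1)) z) := by
    funext z
    simp only [Function.comp]
    rw [← div_div, div_eq_mul_inv]
  rw [hfun]
  have key := hA.hasDerivAt.mul hB
  convert key using 1
  case e'_4 => rfl
  case e'_5 => rfl
  case e'_8 => rfl
  simp only [Function.comp]
  rw [hpt, Complex.Gamma_neg_nat_eq_zero, inv_zero]
  have hGval : Complex.Gamma (-(k : ℂ) + (n : ℂ) / 2) = (Nat.factorial q : ℂ) := by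
    rw [hval, Complex.Gamma_nat_eq_factorial]
  rw [hGval]
  have hexp : -(n : ℂ) - 2 * (-(k : ℂ)) = -(n : ℂ) + 2 * (k : ℂ) := by ring
  rw [hexp]
  have hsign : ((-1 : ℂ)) ^ (k + 1) = (-1) ^ m := by
    have hk2 : k + 1 = m + 2 := by omega
    rw [hk2, pow_add]
    simp
  rw [hsign]
  ring
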